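/- arXiv:2510.13072 — 3 statements merged into one kernel-verified Lean document; each statement's English description precedes it below -/
import Mathlib

section
/- Let n ≥ 2 and 1 ≤ l ≤ n-1. There exists a constant c* > n²/4 depending only on n (e.g., c* = 10n²) with the following property: for all μ ≥ c*, all w > 0, and all λ₁ > 0 with λ₁ ≤ μ + w² - n·w, one has 2w² - (μ + w² - n·w)²/(l·w) - 2·(2w - n)²·w²/(λ₁·l) ≤ 0. -/
theorem stmt_12 (n l : ℕ) (hn : 2 ≤ n) (hl : 1 ≤ l) (hln : l ≤ n - 1) :
    ∃ cstar : ℝ, cstar > (n : ℝ) ^ 2 / 4 ∧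
      ∀ μ : ℝ, μ ≥ cstar → ∀ w : ℝ, w > 0 → ∀ lam1 : ℝ, lam1 > 0 →
        lam1 ≤ μ + w ^ 2 - n * w →
        2 * w ^ 2 - (μ + w ^ 2 - n * w) ^ 2 / ((l : ℝ) * w)
          - 2 * (2 * w - n) ^ 2 * w ^ 2 / (lam1 * l) ≤ 0 := by
  have hn' : (2:ℝ) ≤ (n:ℝ) := by exact_mod_cast hn
  refine ⟨40 * (n:ℝ)^2, by nlinarith, ?_⟩
  intro μ hμ w hw lam1 hlam hle
  have hl' : (1:ℝ) ≤ (l:ℝ) := by exact_mod_cast hl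
  have hln' : (l:ℝ) ≤ (n:ℝ) := by exact_mod_cast hln.trans (Nat.sub_le n 1)
  have hB : (0:ℝ) < 40 * (n:ℝ)^2 + w^2 - n*w := by nlinarith [sq_nonneg (w - n)]
  have hT : (0:ℝ) < μ + w ^ 2 - n * w := lt_of_lt_of_le hlam hle
  have key : 2 * (l:ℝ) * w^3 ≤ (μ + w^2 - n*w)^2 := by
    nlinarith [sq_nonneg (w^2 - 2*(n:ℝ)*w), sq_nonneg (77*w - 40*(n:ℝ)),
      mul_nonneg (by linarith : (0:ℝ) ≤ μ - 40*(n:ℝ)^2)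
        (by linarith : (0:ℝ) ≤ (μ + w^2 - n*w) + (40*(n:ℝ)^2 + w^2 - n*w)),
      mul_pos (mul_pos hw hw) hw, mul_nonneg (mul_nonneg hw.le hw.le) hw.le,
      mul_le_mul_of_nonneg_right hln' (mul_nonneg (mul_nonneg hw.le hw.le) hw.le)]
  have h1 : 2 * w ^ 2 ≤ (μ + w ^ 2 - n * w) ^ 2 / ((l : ℝ) * w) := by
    rw [le_div_iff₀ (by positivity)]
    calc 2 * w ^ 2 * ((l:ℝ) * w) = 2 * (l:ℝ) * w^3 := by ring
    _ ≤ _ := key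
  have h2 : (0:ℝ) ≤ 2 * (2 * w - n) ^ 2 * w ^ 2 / (lam1 * l) := by positivity
  linarith
end

section
/- Let n ≥ 2, μ > 0, and t₁ > 0. Set A = 1 + (n-1)·coth(t₁) and B = (n-1)/(2·sinh²(t₁)). Suppose φ < 0 satisfies both φ² + A·φ + μ = 0 with φ = (-A + √(A² - 4μ))/2 (so A² ≥ 4μ), and the inequality 2·(B + √(B² + μ)) > A + √(A² - 4μ). Then φ² - 2B·φ - μ > 0. -/
open Real

set_option maxHeartbeats 1000000 in
theorem stmt_15 (n : ℕ) (hn : 2 ≤ n) (μ t₁ : ℝ) (hμ : 0 < μ) (ht₁ : 0 < t₁)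
    (A B : ℝ) (hA : A = 1 + ((n : ℝ) - 1) * (Real.cosh t₁ / Real.sinh t₁))
    (hB : B = ((n : ℝ) - 1) / (2 * (Real.sinh t₁) ^ 2))
    (φ : ℝ) (hφ : φ < 0)
    (hA2 : A ^ 2 ≥ 4 * μ)
    (hroot : φ ^ 2 + A * φ + μ = 0)
    (hval : φ = (-A + Real.sqrt (A ^ 2 - 4 * μ)) / 2)
    (hineq : 2 * (B + Real.sqrt (B ^ 2 + μ)) > A + Real.sqrt (A ^ 2 - 4 * μ)) :
    φ ^ 2 - 2 * B * φ - μ > 0 := by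
  set s := Real.sqrt (A ^ 2 - 4 * μ) with hs
  set r := Real.sqrt (B ^ 2 + μ) with hr
  have hs0 : 0 ≤ s := Real.sqrt_nonneg _
  have hr0 : 0 ≤ r := Real.sqrt_nonneg _
  have hs2 : s ^ 2 = A ^ 2 - 4 * μ := Real.sq_sqrt (by linarith)
  have hr2 : r ^ 2 = B ^ 2 + μ := Real.sq_sqrt (by nlinarith)
  have hB0 : 0 < B := by
    have hsinh : 0 < Real.sinh t₁ := Real.sinh_pos_iff.mpr ht₁
    have hn1 : (1 : ℝ) ≤ (n : ℝ) - 1 := by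
      have : (2 : ℝ) ≤ n := by exact_mod_cast hn
      linarith
    rw [hB]
    positivity
  -- x := -φ, x = (A - s)/2 > 0, so A > s
  have hx : -φ = (A - s) / 2 := by rw [hval]; ring
  have hAs : A > s := by nlinarith
  have hAspos : 0 < A + s := by linarith
  -- x * (A + s) = 2μ
  have hxAs : (-φ) * (A + s) = 2 * μ := by nlinarith
  -- x > μ / (B + r)
  have hBr : 0 < B + r := by linarith
  have hxgt : (-φ) * (B + r) > μ := by
    have h2 : 2 * (B + r) > A + s := hineq
    nlinarith [mul_pos (neg_pos.mpr hφ) hBr]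
  -- then -φ + B > r, square
  have hkey : -φ + B > r := by
    have h3 : ((-φ) + B) * (B + r) > μ + B * (B + r) := by nlinarith
    have heq : μ + B * (B + r) = r * (B + r) := by linear_combination -hr2
    exact (mul_lt_mul_iff_of_pos_right hBr).mp (by linarith)
  clear hA hB hroot hval hs hr hA2 hineq hx hxAs hxgt hn
  have h1 : r ^ 2 < (-φ + B) ^ 2 := by
    nlinarith [hkey, hr0]
  nlinarith [h1, hr2]
end

section
/- Let n ≥ 2 and r > 0. For t ∈ (0, r), set A(t) = 1 + (n-1)·coth(t) and B(t) = (n-1)/(2·sinh²(t)). There exists r₀ > 0 depending only on n such that for all r < r₀ and all t ∈ (0, r), one has 2·B(t) > A(t), and consequently for every μ ∈ (0, A(t)²/4], 2/(A(t) + √(A(t)² - 4μ)) > 1/(B(t) + √(B(t)² + μ)). -/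
open Real Set

theorem stmt_17 (n : ℕ) (hn : 2 ≤ n) :
    ∃ r₀ : ℝ, 0 < r₀ ∧ ∀ r : ℝ, 0 < r → r < r₀ → ∀ t ∈ Set.Ioo (0 : ℝ) r,
      2 * (((n : ℝ) - 1) / (2 * (Real.sinh t) ^ 2))
          > 1 + ((n : ℝ) - 1) * (Real.cosh t / Real.sinh t) ∧
      ∀ μ : ℝ, 0 < μ → μ ≤ (1 + ((n : ℝ) - 1) * (Real.cosh t / Real.sinh t)) ^ 2 / 4 →
        2 / ((1 + ((n : ℝ) - 1) * (Real.cosh t / Real.sinh t))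
            + Real.sqrt ((1 + ((n : ℝ) - 1) * (Real.cosh t / Real.sinh t)) ^ 2 - 4 * μ))
          > 1 / ((((n : ℝ) - 1) / (2 * (Real.sinh t) ^ 2))
            + Real.sqrt ((((n : ℝ) - 1) / (2 * (Real.sinh t) ^ 2)) ^ 2 + μ)) := by
  refine ⟨1/8, by norm_num, ?_⟩
  intro r hr hrr t ht
  obtain ⟨ht0, htr⟩ := ht
  have htu : t < 1/8 := lt_trans htr hrr
  have hS : 0 < Real.sinh t := Real.sinh_pos_iff.2 ht0
  have hC : 0 < Real.cosh t := Real.cosh_pos t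
  have hn1 : (1:ℝ) ≤ (n:ℝ) - 1 := by
    have : (2:ℝ) ≤ (n:ℝ) := by exact_mod_cast hn
    linarith
  have hprod : Real.exp t * Real.exp (-t) = 1 := by
    rw [← Real.exp_add]; simp
  have h1lb : (1:ℝ) - t ≤ Real.exp (-t) := by
    have := Real.add_one_le_exp (-t); linarith
  have hexpt : Real.exp t < 8/7 := by
    nlinarith [Real.exp_pos t, Real.exp_pos (-t)]
  have hexnt : Real.exp (-t) ≤ 1 := Real.exp_le_one_iff.2 (by linarith)
  have hS2t : Real.sinh t ≤ 2 * t := by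
    rw [Real.sinh_eq]
    nlinarith [Real.exp_pos t, Real.exp_pos (-t)]
  have hC2 : Real.cosh t ≤ 2 := by
    rw [Real.cosh_eq]
    nlinarith
  set S := Real.sinh t with hSdef
  set C := Real.cosh t with hCdef
  have key : S^2 + ((n:ℝ)-1) * S * C < (n:ℝ) - 1 := by
    nlinarith [mul_le_mul hS2t hC2 hC.le (by linarith : (0:ℝ) ≤ 2*t),
      mul_le_mul hS2t hS2t hS.le (by linarith : (0:ℝ) ≤ 2*t)]
  have hS2 : (0:ℝ) < S^2 := by positivity
  have h1 : 1 + ((n:ℝ)-1)*(C/S) < 2*(((n:ℝ)-1)/(2*S^2)) := by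
    rw [show 2*(((n:ℝ)-1)/(2*S^2)) = ((n:ℝ)-1)/S^2 by ring]
    rw [lt_div_iff₀ hS2]
    have hCS : C/S * S = C := div_mul_cancel₀ C hS.ne'
    nlinarith [key]
  refine ⟨h1, ?_⟩
  intro μ hμ hμA
  set A : ℝ := 1 + ((n:ℝ)-1)*(C/S) with hAdef
  set B : ℝ := ((n:ℝ)-1)/(2*S^2) with hBdef
  have hA : 0 < A := by
    have : 0 < C/S := div_pos hC hS
    have : 0 ≤ ((n:ℝ)-1)*(C/S) := by positivity
    simp only [hAdef]; linarith
  have hB : 0 < B := by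
    have : 0 < (n:ℝ)-1 := by linarith
    positivity
  have sq1 : Real.sqrt (A^2 - 4*μ) ≤ A := by
    calc Real.sqrt (A^2 - 4*μ) ≤ Real.sqrt (A^2) :=
          Real.sqrt_le_sqrt (by linarith)
      _ = A := Real.sqrt_sq hA.le
  have sq2 : B ≤ Real.sqrt (B^2 + μ) := by
    calc B = Real.sqrt (B^2) := (Real.sqrt_sq hB.le).symm
      _ ≤ Real.sqrt (B^2 + μ) := Real.sqrt_le_sqrt (by linarith)
  have hx : 0 < A + Real.sqrt (A^2 - 4*μ) := by
    have := Real.sqrt_nonneg (A^2 - 4*μ); linarith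
  have hy : 0 < B + Real.sqrt (B^2 + μ) := by linarith
  rw [gt_iff_lt, div_lt_div_iff₀ hy hx]
  linarith [h1, sq1, sq2]
end
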